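/- arXiv:2102.04690 — 3 statements merged into one kernel-verified Lean document; each statement's English description precedes it below -/
import Mathlib

section
/- Let d ≥ 1, T ≥ 1, let x_1, …, x_T ∈ ℝ^d, and let κ_i, κ_j : ℝ^d → ℝ be measurable, Lebesgue-integrable functions with |κ_i(ρ)| ≤ 1 and |κ_j(ρ)| ≤ 1 for all ρ. Let α_{i,1}, …, α_{i,T} and α_{j,1}, …, α_{j,T} be real coefficients, and define f̂_i(x) = Σ_{t=1}^T α_{i,t} κ_i(x − x_t) and f̂_j(x) = Σ_{t=1}^T α_{j,t} κ_j(x − x_t). Let C_m be a constant satisfying Σ_{t=1}^T α_{i,t}² ≤ C_m and Σ_{t=1}^T (α_{i,t} − α_{j,t})² ≤ 2·C_m, and let 𝒰_d denote the Lebesgue volume of the d-dimensional Euclidean unit ball. Then (1/𝒰_d) ∫_{‖x‖ ≤ 1} |f̂_i(x) − f̂_j(x)|² dx ≤ (2·C_m/𝒰_d) · Σ_{t=1}^T ( Δ(κ_i, κ_j) + 2·𝒰_d ). -/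
open MeasureTheory

/-- Lemma 2 of the paper: the average squared difference over the Euclidean unit ball
between the kernel-expansion function approximations built from two kernels is bounded
in terms of the kernel similarity measure `Δ(κ_i, κ_j) = ∫ |κ_i(ρ) - κ_j(ρ)|²dρ`. -/
theorem stmt_2 (d T : ℕ) (hd : 1 ≤ d) (hT : 1 ≤ T)
    (x : Fin T → EuclideanSpace ℝ (Fin d))
    (κi κj : EuclideanSpace ℝ (Fin d) → ℝ)
    (hmi : Measurable κi) (hmj : Measurable κj)
    (hii : Integrable κi) (hij : Integrable κj)
    (hbi : ∀ ρ, |κi ρ| ≤ 1) (hbj : ∀ ρ, |κj ρ| ≤ 1)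
    (αi αj : Fin T → ℝ) (Cm : ℝ)
    (hCi : ∑ t, (αi t) ^ 2 ≤ Cm)
    (hCij : ∑ t, (αi t - αj t) ^ 2 ≤ 2 * Cm)
    (Ud Δ : ℝ)
    (hUd : Ud = (volume (Metric.closedBall (0 : EuclideanSpace ℝ (Fin d)) 1)).toReal)
    (hΔ : Δ = ∫ ρ, |κi ρ - κj ρ| ^ 2) :
    (1 / Ud) * ∫ y in Metric.closedBall (0 : EuclideanSpace ℝ (Fin d)) 1,
        |(∑ t, αi t * κi (y - x t)) - ∑ t, αj t * κj (y - x t)| ^ 2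
      ≤ (2 * Cm / Ud) * ∑ _t : Fin T, (Δ + 2 * Ud) := by
  set B := Metric.closedBall (0 : EuclideanSpace ℝ (Fin d)) 1 with hB
  have hBfin : volume B < ⊤ := measure_closedBall_lt_top
  have hUdpos : 0 < Ud := by
    rw [hUd]
    exact ENNReal.toReal_pos (Metric.measure_closedBall_pos volume 0 one_pos).ne' hBfin.ne
  have hCm0 : 0 ≤ Cm := le_trans (Finset.sum_nonneg fun t _ => sq_nonneg _) hCi
  set D : EuclideanSpace ℝ (Fin d) → ℝ := fun ρ => |κi ρ - κj ρ| ^ 2 with hDdef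
  have hDm : Measurable D := ((hmi.sub hmj).abs.pow_const 2)
  have hDnn : ∀ ρ, 0 ≤ D ρ := fun ρ => sq_nonneg _
  have hDint : Integrable D := by
    refine Integrable.mono' ((hii.abs.const_mul 2).add (hij.abs.const_mul 2))
      hDm.aestronglyMeasurable (Filter.Eventually.of_forall fun ρ => ?_)
    have h1 : |κi ρ - κj ρ| ≤ |κi ρ| + |κj ρ| := abs_sub _ _
    have h2 : |κi ρ| + |κj ρ| ≤ 2 := by linarith [hbi ρ, hbj ρ]
    have hx : |κi ρ - κj ρ| ^ 2 ≤ 2 * |κi ρ - κj ρ| := by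
      nlinarith [abs_nonneg (κi ρ - κj ρ)]
    have : D ρ ≤ 2 * |κi ρ| + 2 * |κj ρ| := by
      show |κi ρ - κj ρ| ^ 2 ≤ 2 * |κi ρ| + 2 * |κj ρ|
      nlinarith [hx, h1]
    simpa [Real.norm_eq_abs, abs_of_nonneg (hDnn ρ)] using this
  have hΔ0 : 0 ≤ Δ := hΔ ▸ integral_nonneg hDnn
  -- integrability of shifted D on B
  have hDshift : ∀ t : Fin T, Integrable (fun y => D (y - x t)) :=
    fun t => hDint.comp_sub_right (x t)
  have hSt : ∀ t : Fin T, ∫ y in B, D (y - x t) ≤ Δ := by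
    intro t
    have h1 : ∫ y in B, D (y - x t) ≤ ∫ y, D (y - x t) :=
      setIntegral_le_integral (hDshift t) (Filter.Eventually.of_forall fun y => hDnn _)
    have h2 : ∫ y, D (y - x t) = ∫ ρ, D ρ := integral_sub_right_eq_self D (x t)
    rw [hΔ]; linarith [h1, h2.le, h2.ge]
  -- pointwise bound
  have key : ∀ y : EuclideanSpace ℝ (Fin d),
      |(∑ t, αi t * κi (y - x t)) - ∑ t, αj t * κj (y - x t)| ^ 2
        ≤ 2 * Cm * (∑ t, D (y - x t)) + 4 * Cm * T := by
    intro y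
    set a := ∑ t, αi t * (κi (y - x t) - κj (y - x t)) with ha
    set b := ∑ t, (αi t - αj t) * κj (y - x t) with hb
    have hab : (∑ t, αi t * κi (y - x t)) - ∑ t, αj t * κj (y - x t) = a + b := by
      rw [ha, hb, ← Finset.sum_add_distrib, ← Finset.sum_sub_distrib]
      exact Finset.sum_congr rfl fun t _ => by ring
    have hSnn : 0 ≤ ∑ t, D (y - x t) := Finset.sum_nonneg fun t _ => hDnn _
    have hcs1 : a ^ 2 ≤ (∑ t, (αi t) ^ 2) * ∑ t, (κi (y - x t) - κj (y - x t)) ^ 2 :=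
      Finset.sum_mul_sq_le_sq_mul_sq _ _ _
    have hDsum : (∑ t, (κi (y - x t) - κj (y - x t)) ^ 2) = ∑ t, D (y - x t) :=
      Finset.sum_congr rfl fun t _ => (sq_abs _).symm
    have h1 : a ^ 2 ≤ Cm * ∑ t, D (y - x t) := by
      rw [hDsum] at hcs1
      exact le_trans hcs1 (mul_le_mul_of_nonneg_right hCi hSnn)
    have hcs2 : b ^ 2 ≤ (∑ t, (αi t - αj t) ^ 2) * ∑ t, (κj (y - x t)) ^ 2 :=
      Finset.sum_mul_sq_le_sq_mul_sq _ _ _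
    have hκsum : (∑ t, (κj (y - x t)) ^ 2) ≤ (T : ℝ) := by
      calc (∑ t, (κj (y - x t)) ^ 2) ≤ ∑ _t : Fin T, (1 : ℝ) := by
            refine Finset.sum_le_sum fun t _ => ?_
            rw [← sq_abs]
            exact pow_le_one₀ (abs_nonneg _) (hbj _)
        _ = (T : ℝ) := by simp
    have hκnn : 0 ≤ ∑ t, (κj (y - x t)) ^ 2 := Finset.sum_nonneg fun t _ => sq_nonneg _
    have h2 : b ^ 2 ≤ 2 * Cm * (T : ℝ) := by
      refine le_trans hcs2 ?_
      have hd2 : 0 ≤ ∑ t, (αi t - αj t) ^ 2 := Finset.sum_nonneg fun t _ => sq_nonneg _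
      calc (∑ t, (αi t - αj t) ^ 2) * ∑ t, (κj (y - x t)) ^ 2
          ≤ (2 * Cm) * ∑ t, (κj (y - x t)) ^ 2 := mul_le_mul_of_nonneg_right hCij hκnn
        _ ≤ (2 * Cm) * (T : ℝ) := mul_le_mul_of_nonneg_left hκsum (by linarith)
    rw [hab, sq_abs]
    nlinarith [sq_nonneg (a - b), h1, h2]
  -- integral of the bound
  set S : EuclideanSpace ℝ (Fin d) → ℝ := fun y => ∑ t, D (y - x t) with hSdef
  have hSint : IntegrableOn S B := by
    refine Integrable.integrableOn ?_
    exact integrable_finset_sum _ fun t _ => hDshift t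
  have hGint : IntegrableOn (fun y => 2 * Cm * S y + 4 * Cm * T) B := by
    refine Integrable.add (hSint.const_mul _) ?_
    exact integrableOn_const hBfin.ne
  have hmono : (∫ y in B, |(∑ t, αi t * κi (y - x t)) - ∑ t, αj t * κj (y - x t)| ^ 2)
      ≤ ∫ y in B, (2 * Cm * S y + 4 * Cm * T) := by
    refine integral_mono_of_nonneg (Filter.Eventually.of_forall fun y => sq_nonneg _)
      hGint (Filter.Eventually.of_forall fun y => key y)
  have hGval : (∫ y in B, (2 * Cm * S y + 4 * Cm * T))
      = 2 * Cm * (∫ y in B, S y) + 4 * Cm * T * Ud := by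
    rw [integral_add (hSint.const_mul _) (integrableOn_const hBfin.ne),
      integral_const, integral_const_mul]
    rw [hUd]
    simp [smul_eq_mul, Measure.real]
    ring
  have hSval : (∫ y in B, S y) ≤ (T : ℝ) * Δ := by
    rw [hSdef]
    rw [integral_finset_sum _ fun t _ => (hDshift t).integrableOn]
    calc (∑ t : Fin T, ∫ y in B, D (y - x t)) ≤ ∑ _t : Fin T, Δ :=
          Finset.sum_le_sum fun t _ => hSt t
      _ = (T : ℝ) * Δ := by simp [mul_comm]
  have hI : (∫ y in B, |(∑ t, αi t * κi (y - x t)) - ∑ t, αj t * κj (y - x t)| ^ 2)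
      ≤ 2 * Cm * ((T : ℝ) * (Δ + 2 * Ud)) := by
    have := hmono
    rw [hGval] at this
    nlinarith [hSval, hCm0]
  have hsum : (∑ _t : Fin T, (Δ + 2 * Ud)) = (T : ℝ) * (Δ + 2 * Ud) := by
    rw [Finset.sum_const, Finset.card_univ, Fintype.card_fin, nsmul_eq_mul]
  rw [hsum]
  have h := mul_le_mul_of_nonneg_left hI (le_of_lt (one_div_pos.mpr hUdpos))
  calc (1 / Ud) * ∫ y in B, |(∑ t, αi t * κi (y - x t)) - ∑ t, αj t * κj (y - x t)| ^ 2
      ≤ (1 / Ud) * (2 * Cm * ((T : ℝ) * (Δ + 2 * Ud))) := h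
    _ = (2 * Cm / Ud) * ((T : ℝ) * (Δ + 2 * Ud)) := by ring
end

section
/- Let N ≥ 1, T ≥ 1, let 𝔻 be a nonempty subset of {1, …, N}, let ξ ∈ [0, 1), η > 0, and let ℓ̂_{i,t} ≥ 0 for all i ∈ {1, …, N} and t ∈ {1, …, T}. Define weights by u_{i,1} = 1 and u_{i,t+1} = u_{i,t}·exp(−η·ℓ̂_{i,t}), set U_t = Σ_{i=1}^N u_{i,t}, and define the probabilities p_{i,t} = (1 − ξ)·u_{i,t}/U_t + (ξ/|𝔻|)·1_{i ∈ 𝔻}. Then for every i ∈ {1, …, N}: Σ_{t=1}^T Σ_{j=1}^N p_{j,t}·ℓ̂_{j,t} − Σ_{t=1}^T ℓ̂_{i,t} ≤ (ln N)/η + Σ_{t=1}^T Σ_{j ∈ 𝔻} (ξ/|𝔻|)·ℓ̂_{j,t} + (η/2)·Σ_{t=1}^T Σ_{j=1}^N ( p_{j,t} − (ξ/|𝔻|)·1_{j ∈ 𝔻} )·ℓ̂_{j,t}². -/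
lemma exp_neg_le_quad {x : ℝ} (hx : 0 ≤ x) : Real.exp (-x) ≤ 1 - x + x ^ 2 / 2 := by
  have hmono : MonotoneOn (fun z : ℝ => 1 - z + z ^ 2 / 2 - Real.exp (-z)) (Set.Ici 0) := by
    have hd : ∀ y : ℝ, HasDerivAt (fun z : ℝ => 1 - z + z ^ 2 / 2 - Real.exp (-z))
        (-1 + y + Real.exp (-y)) y := by
      intro y
      have h1 : HasDerivAt (fun z : ℝ => Real.exp (-z)) (-Real.exp (-y)) y := by
        simpa [Function.comp_def] using (Real.hasDerivAt_exp (-y)).comp y (hasDerivAt_neg y)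
      have h2 : HasDerivAt (fun z : ℝ => 1 - z + z ^ 2 / 2) (-1 + y) y := by
        have ha : HasDerivAt (fun z : ℝ => 1 - z) (-1) y := by
          simpa using (hasDerivAt_id y).const_sub 1
        have hb : HasDerivAt (fun z : ℝ => z ^ 2 / 2) y y := by
          simpa using (hasDerivAt_pow 2 y).div_const 2
        simpa [Pi.add_def] using ha.add hb
      simpa [Pi.sub_def] using h2.sub h1
    apply monotoneOn_of_deriv_nonneg (convex_Ici 0)
    · exact (Continuous.sub (by continuity) (by continuity)).continuousOn
    · intro y hy
      exact (hd y).differentiableAt.differentiableWithinAt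
    · intro y hy
      rw [(hd y).deriv]
      have := Real.add_one_le_exp (-y)
      linarith
  have h0 : (fun z : ℝ => 1 - z + z ^ 2 / 2 - Real.exp (-z)) 0 ≤ _ :=
    hmono (Set.self_mem_Ici) hx hx
  simp at h0
  linarith

lemma step_aux {n : ℕ} (η : ℝ) (hη : 0 < η) (w l : Fin n → ℝ)
    (hw : ∀ j, 0 < w j) (hl : ∀ j, 0 ≤ l j)
    (hne : (Finset.univ : Finset (Fin n)).Nonempty) :
    Real.log (∑ j, w j * Real.exp (-(η * l j))) - Real.log (∑ j, w j) ≤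
      -(η * ∑ j, w j / (∑ j, w j) * l j)
        + η ^ 2 / 2 * ∑ j, w j / (∑ j, w j) * l j ^ 2 := by
  set W := ∑ j, w j with hW
  have hWpos : 0 < W := Finset.sum_pos (fun j _ => hw j) hne
  have hW0 : W ≠ 0 := hWpos.ne'
  set A := ∑ j, w j / W * l j with hA
  set B := ∑ j, w j / W * l j ^ 2 with hB
  set z := -(η * A) + η ^ 2 / 2 * B with hz
  have hexpand : W * (1 + z) = ∑ j, w j * (1 - η * l j + (η * l j) ^ 2 / 2) := by
    have hAU : W * A = ∑ j, w j * l j := by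
      rw [hA, Finset.mul_sum]
      exact Finset.sum_congr rfl fun j _ => by field_simp
    have hBU : W * B = ∑ j, w j * l j ^ 2 := by
      rw [hB, Finset.mul_sum]
      exact Finset.sum_congr rfl fun j _ => by field_simp
    have h3 : W * (1 + z) = W - η * (W * A) + η ^ 2 / 2 * (W * B) := by rw [hz]; ring
    rw [h3, hAU, hBU, hW, Finset.mul_sum, Finset.mul_sum, ← Finset.sum_sub_distrib,
      ← Finset.sum_add_distrib]
    exact Finset.sum_congr rfl fun j _ => by ring
  have hEpos : 0 < ∑ j, w j * Real.exp (-(η * l j)) :=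
    Finset.sum_pos (fun j _ => mul_pos (hw j) (Real.exp_pos _)) hne
  have h1 : ∑ j, w j * Real.exp (-(η * l j)) ≤ W * (1 + z) := by
    rw [hexpand]
    refine Finset.sum_le_sum fun j _ => ?_
    refine mul_le_mul_of_nonneg_left ?_ (hw j).le
    simpa using exp_neg_le_quad (mul_nonneg hη.le (hl j))
  have h1pz : 0 < 1 + z := by
    by_contra h
    push_neg at h
    have h2 : W * (1 + z) ≤ 0 := mul_nonpos_of_nonneg_of_nonpos hWpos.le h
    linarith
  have hlog : Real.log (∑ j, w j * Real.exp (-(η * l j))) ≤ Real.log W + z := by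
    calc Real.log (∑ j, w j * Real.exp (-(η * l j)))
        ≤ Real.log (W * (1 + z)) := Real.log_le_log hEpos h1
      _ = Real.log W + Real.log (1 + z) := Real.log_mul hWpos.ne' h1pz.ne'
      _ ≤ Real.log W + z := by
          have := Real.log_le_sub_one_of_pos h1pz
          linarith
  rw [hz] at hlog ⊢
  linarith

/-- Deterministic core (equation (a19)) of the paper's Lemma 4: regret bound for the
exponentially-weighted node-selection rule with uniform exploration over the dominating
set `𝔻` of the feedback graph. -/
theorem stmt_8 (N T : ℕ) (hN : 1 ≤ N) (hT : 1 ≤ T)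
    (𝔻 : Finset (Fin N)) (h𝔻 : 𝔻.Nonempty)
    (ξ η : ℝ) (hξ0 : 0 ≤ ξ) (hξ1 : ξ < 1) (hη : 0 < η)
    (ℓ : Fin N → ℕ → ℝ) (hℓ : ∀ i t, 0 ≤ ℓ i t)
    (u : Fin N → ℕ → ℝ) (U : ℕ → ℝ) (p : Fin N → ℕ → ℝ)
    (hu1 : ∀ i, u i 1 = 1)
    (hurec : ∀ i t, u i (t + 1) = u i t * Real.exp (-(η * ℓ i t)))
    (hU : ∀ t, U t = ∑ i, u i t)
    (hp : ∀ i t, p i t =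
      (1 - ξ) * (u i t / U t) + (ξ / 𝔻.card) * (if i ∈ 𝔻 then 1 else 0)) :
    ∀ i : Fin N,
      (∑ t ∈ Finset.Icc 1 T, ∑ j, p j t * ℓ j t) - ∑ t ∈ Finset.Icc 1 T, ℓ i t ≤
        Real.log N / η + (∑ t ∈ Finset.Icc 1 T, ∑ j ∈ 𝔻, (ξ / 𝔻.card) * ℓ j t) +
          (η / 2) * ∑ t ∈ Finset.Icc 1 T, ∑ j,
            (p j t - (ξ / 𝔻.card) * (if j ∈ 𝔻 then 1 else 0)) * (ℓ j t) ^ 2 := by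
  intro i
  have hNe : (Finset.univ : Finset (Fin N)).Nonempty := ⟨i, Finset.mem_univ i⟩
  have huform : ∀ j s, u j (s+1) = Real.exp (-(η * ∑ r ∈ Finset.range s, ℓ j (r+1))) := by
    intro j s
    induction s with
    | zero => simpa using hu1 j
    | succ n ih =>
      rw [hurec j (n+1), ih, ← Real.exp_add, Finset.sum_range_succ]
      congr 1
      ring
  have hupos : ∀ j s, 0 < u j (s+1) := fun j s => by rw [huform]; exact Real.exp_pos _
  have hUpos : ∀ s, 0 < U (s+1) := fun s => by
    rw [hU]; exact Finset.sum_pos (fun j _ => hupos j s) hNe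
  have hIcc : ∀ f : ℕ → ℝ, ∑ t ∈ Finset.Icc 1 T, f t = ∑ s ∈ Finset.range T, f (s+1) := by
    intro f
    rw [← Finset.Ico_add_one_right_eq_Icc, Finset.sum_Ico_eq_sum_range]
    exact Finset.sum_congr (by norm_num) fun s _ => by rw [Nat.add_comm]
  -- per-step inequality
  have hstep : ∀ s : ℕ,
      Real.log (U (s+1+1)) - Real.log (U (s+1)) ≤
        -(η * ∑ j, u j (s+1) / U (s+1) * ℓ j (s+1))
          + η ^ 2 / 2 * ∑ j, u j (s+1) / U (s+1) * ℓ j (s+1) ^ 2 := by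
    intro s
    have hU2 : U (s+1+1) = ∑ j, u j (s+1) * Real.exp (-(η * ℓ j (s+1))) := by
      rw [hU]; exact Finset.sum_congr rfl fun j _ => hurec j (s+1)
    rw [hU2, hU (s+1)]
    exact step_aux η hη (fun j => u j (s+1)) (fun j => ℓ j (s+1))
      (fun j => hupos j s) (fun j => hℓ j (s+1)) hNe
  -- telescoping
  have htel : Real.log (U (T+1)) - Real.log (U 1) ≤
      -(η * ∑ s ∈ Finset.range T, ∑ j, u j (s+1) / U (s+1) * ℓ j (s+1))
        + η ^ 2 / 2 * ∑ s ∈ Finset.range T, ∑ j, u j (s+1) / U (s+1) * ℓ j (s+1) ^ 2 := by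
    have h := Finset.sum_range_sub (fun s => Real.log (U (s+1))) T
    rw [← h, Finset.mul_sum, Finset.mul_sum, ← Finset.sum_neg_distrib,
      ← Finset.sum_add_distrib]
    exact Finset.sum_le_sum fun s _ => hstep s
  have hU1 : U 1 = (N : ℝ) := by
    rw [hU]; simp [hu1]
  have hlow : -(η * ∑ s ∈ Finset.range T, ℓ i (s+1)) ≤ Real.log (U (T+1)) := by
    have h1 : u i (T+1) ≤ U (T+1) := by
      rw [hU]
      exact Finset.single_le_sum (fun j _ => (hupos j T).le) (Finset.mem_univ i)
    have h2 := Real.log_le_log (hupos i T) h1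
    rwa [huform i T, Real.log_exp] at h2
  rw [hU1] at htel
  have key : η * (∑ s ∈ Finset.range T, ∑ j, u j (s+1) / U (s+1) * ℓ j (s+1))
      - η * (∑ s ∈ Finset.range T, ℓ i (s+1)) ≤
      Real.log N + η ^ 2 / 2 * ∑ s ∈ Finset.range T, ∑ j,
        u j (s+1) / U (s+1) * ℓ j (s+1) ^ 2 := by
    linarith
  have F1 : (∑ t ∈ Finset.Icc 1 T, ∑ j, u j t / U t * ℓ j t)
      - (∑ t ∈ Finset.Icc 1 T, ℓ i t) ≤
      Real.log N / η + η / 2 * ∑ t ∈ Finset.Icc 1 T, ∑ j, u j t / U t * ℓ j t ^ 2 := by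
    rw [hIcc, hIcc, hIcc]
    have h3 : (∑ s ∈ Finset.range T, ∑ j, u j (s+1) / U (s+1) * ℓ j (s+1))
        - (∑ s ∈ Finset.range T, ℓ i (s+1))
        - η / 2 * ∑ s ∈ Finset.range T, ∑ j, u j (s+1) / U (s+1) * ℓ j (s+1) ^ 2
        ≤ Real.log N / η := by
      rw [le_div_iff₀ hη]
      nlinarith [key]
    linarith
  -- rewrite the goal sums
  have hsum1 : ∀ t, ∑ j, p j t * ℓ j t =
      (1 - ξ) * (∑ j, u j t / U t * ℓ j t) + ∑ j ∈ 𝔻, (ξ / 𝔻.card) * ℓ j t := by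
    intro t
    have : ∀ j : Fin N, p j t * ℓ j t =
        (1 - ξ) * (u j t / U t * ℓ j t) +
          (if j ∈ 𝔻 then (ξ / 𝔻.card) * ℓ j t else 0) := by
      intro j
      rw [hp]
      split_ifs <;> ring
    rw [Finset.sum_congr rfl fun j _ => this j, Finset.sum_add_distrib, ← Finset.mul_sum,
      Finset.sum_ite_mem, Finset.univ_inter]
  have hsum2 : ∀ t, (∑ j, (p j t - (ξ / 𝔻.card) * (if j ∈ 𝔻 then 1 else 0)) * ℓ j t ^ 2)
      = (1 - ξ) * ∑ j, u j t / U t * ℓ j t ^ 2 := by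
    intro t
    rw [Finset.mul_sum]
    exact Finset.sum_congr rfl fun j _ => by rw [hp]; ring
  have g1 : (∑ t ∈ Finset.Icc 1 T, ∑ j, p j t * ℓ j t) =
      (1 - ξ) * (∑ t ∈ Finset.Icc 1 T, ∑ j, u j t / U t * ℓ j t)
        + ∑ t ∈ Finset.Icc 1 T, ∑ j ∈ 𝔻, (ξ / 𝔻.card) * ℓ j t := by
    rw [Finset.sum_congr rfl fun t _ => hsum1 t, Finset.sum_add_distrib, ← Finset.mul_sum]
  have g2 : (∑ t ∈ Finset.Icc 1 T, ∑ j,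
        (p j t - (ξ / 𝔻.card) * (if j ∈ 𝔻 then 1 else 0)) * ℓ j t ^ 2)
      = (1 - ξ) * ∑ t ∈ Finset.Icc 1 T, ∑ j, u j t / U t * ℓ j t ^ 2 := by
    rw [Finset.sum_congr rfl fun t _ => hsum2 t, ← Finset.mul_sum]
  rw [g1, g2]
  have hlogN : 0 ≤ Real.log N := Real.log_nonneg (by exact_mod_cast hN)
  have hLi : 0 ≤ ∑ t ∈ Finset.Icc 1 T, ℓ i t :=
    Finset.sum_nonneg fun t _ => hℓ i t
  have F2 := mul_le_mul_of_nonneg_left F1 (by linarith : (0:ℝ) ≤ 1 - ξ)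
  nlinarith [F2, mul_nonneg hξ0 hLi, mul_nonneg hξ0 (div_nonneg hlogN hη.le)]
end

section
/- Let N ≥ 1, ξ ∈ [0, 1), and β ≤ 1/N. Let u_1, …, u_N be nonnegative reals with U = Σ_{i=1}^N u_i > 0, and define 𝔻' = { i ∈ {1,…,N} : u_i/U ≥ (β − ξ/N)/(1 − ξ) }. Then 𝔻' is nonempty, and for the probabilities p_i = (1 − ξ)·u_i/U + (ξ/|𝔻'|)·1_{i ∈ 𝔻'}, it holds that p_i ≥ β for every i ∈ 𝔻'. -/
/-- The claim underlying the graph-refinement algorithm SFG-MKL-R (Theorem 2): the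
thresholded set `𝔻'` of equation (15) is nonempty whenever `β ≤ 1/N`, and under the
refined probability mass function of equation (17) every node of `𝔻'` has selection
probability at least `β`. -/
theorem stmt_16 (N : ℕ) (hN : 1 ≤ N)
    (ξ β : ℝ) (hξ0 : 0 ≤ ξ) (hξ1 : ξ < 1) (hβ : β ≤ 1 / N)
    (u : Fin N → ℝ) (hu : ∀ i, 0 ≤ u i)
    (U : ℝ) (hU : U = ∑ i, u i) (hUpos : 0 < U)
    (𝔻' : Finset (Fin N))
    (h𝔻' : 𝔻' = Finset.univ.filter (fun i => (β - ξ / N) / (1 - ξ) ≤ u i / U)) :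
    𝔻'.Nonempty ∧
      ∀ i ∈ 𝔻', β ≤ (1 - ξ) * (u i / U) + ξ / 𝔻'.card := by
  have hNpos : (0:ℝ) < N := by exact_mod_cast hN
  have h1ξ : (0:ℝ) < 1 - ξ := by linarith
  -- threshold is at most 1/N
  have hβN : β * N ≤ 1 := (le_div_iff₀ hNpos).mp hβ
  have hthr : (β - ξ / N) / (1 - ξ) ≤ 1 / N := by
    rw [div_le_div_iff₀ h1ξ hNpos]
    have hc : ξ / N * N = ξ := div_mul_cancel₀ _ hNpos.ne'
    nlinarith
  -- some u i ≥ U / N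
  have hex : ∃ i : Fin N, U / N ≤ u i := by
    have hne : (Finset.univ : Finset (Fin N)).Nonempty := by
      simpa [Finset.univ_nonempty_iff] using Fin.pos_iff_nonempty.mp hN
    have hsum : ∑ _i : Fin N, U / N ≤ ∑ i, u i := by
      rw [Finset.sum_const, Finset.card_univ, Fintype.card_fin, nsmul_eq_mul]
      rw [mul_div_cancel₀ _ (ne_of_gt hNpos)]
      exact le_of_eq hU
    obtain ⟨i, _, hi⟩ := Finset.exists_le_of_sum_le hne hsum
    exact ⟨i, hi⟩
  obtain ⟨i₀, hi₀⟩ := hex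
  have hmem : i₀ ∈ 𝔻' := by
    rw [h𝔻', Finset.mem_filter]
    refine ⟨Finset.mem_univ _, hthr.trans ?_⟩
    rw [div_le_div_iff₀ hNpos hUpos]
    have := (div_le_iff₀ hNpos).mp hi₀
    linarith
  have hne : 𝔻'.Nonempty := ⟨i₀, hmem⟩
  refine ⟨hne, fun i hi => ?_⟩
  have hcardpos : 0 < (𝔻'.card : ℝ) := by exact_mod_cast Finset.card_pos.mpr hne
  have hcardN : (𝔻'.card : ℝ) ≤ N := by
    exact_mod_cast (Finset.card_le_univ 𝔻').trans_eq (by simp)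
  have hξcard : ξ / N ≤ ξ / 𝔻'.card :=
    div_le_div_of_nonneg_left hξ0 hcardpos hcardN
  have hi' : (β - ξ / N) / (1 - ξ) ≤ u i / U := by
    rw [h𝔻', Finset.mem_filter] at hi; exact hi.2
  have : β - ξ / N ≤ (1 - ξ) * (u i / U) := by
    rw [div_le_iff₀ h1ξ] at hi'; linarith [hi']
  linarith
end
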